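/- arXiv:2502.03073 — 5 statements merged into one kernel-verified Lean document; each statement's English description precedes it below -/
import Mathlib

section
/- Let N ≥ 1 and let 0 < k < N. Then the sum, over all paths w : Fin N → Bool with w(0) = true and exactly k visits to S1, of the weight of w equals ∑_{j=1}^{min(k, N−k)} C(k−1, j−1)·p11^{k−j}·p10^{j}·C(N−k−1, j−1)·p01^{j−1}·p00^{N−k−j} + ∑_{j=1}^{min(k−1, N−k)} C(k−1, j)·p11^{k−j−1}·p10^{j}·C(N−k−1, j−1)·p01^{j}·p00^{N−k−j}. (This is the quantity P₁(k, N | S₁) of Theorem 1.) -/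
open Finset

/-- Transition probability of the two-state chain: `false` is S0, `true` is S1. -/
def mcStep (p00 p01 p10 p11 : ℝ) : Bool → Bool → ℝ
  | false, false => p00
  | false, true  => p01
  | true,  false => p10
  | true,  true  => p11

/-- Weight of a path `w : Fin N → Bool`: product over `i = 0, …, N-2` of the
transition probability from `w i` to `w (i+1)`; equals `1` when `N = 1`. -/
def pathWeight (p00 p01 p10 p11 : ℝ) {N : ℕ} (w : Fin N → Bool) : ℝ :=
  ∏ i : Fin (N - 1),
    mcStep p00 p01 p10 p11
      (w ⟨i.val, by have := i.isLt; omega⟩)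
      (w ⟨i.val + 1, by have := i.isLt; omega⟩)

/-- Number of visits to S1 (i.e. `true`) of a path. -/
def visitsS1 {N : ℕ} (w : Fin N → Bool) : ℕ :=
  (Finset.univ.filter fun i : Fin N => w i = true).card

/-- Number of descents (indices `i ≤ N-2` with `w i = true` and `w (i+1) = false`). -/
def descents {N : ℕ} (w : Fin N → Bool) : ℕ :=
  (Finset.univ.filter fun i : Fin (N - 1) =>
    w ⟨i.val, by have := i.isLt; omega⟩ = true ∧
    w ⟨i.val + 1, by have := i.isLt; omega⟩ = false).card

/-- Number of ascents (indices `i ≤ N-2` with `w i = false` and `w (i+1) = true`). -/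
def ascents {N : ℕ} (w : Fin N → Bool) : ℕ :=
  (Finset.univ.filter fun i : Fin (N - 1) =>
    w ⟨i.val, by have := i.isLt; omega⟩ = false ∧
    w ⟨i.val + 1, by have := i.isLt; omega⟩ = true).card

/-!
Split the paths by their final state and build them by appending one step at a time: the weight
sums of paths ending in S1 and in S0 obey the transfer recurrences
`E₁(n+1) = E₁(n) p11 + E₀(n) p01` and `E₀(n+1) = E₁(n) p10 + E₀(n) p00`.
The closed forms come from decomposing a path into alternating runs (`j` runs of ones and of
zeros give `C(k-1, j-1) C(N-k-1, j-1)` paths); Pascal's rule shows that they satisfy the same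
recurrences with the same initial values.
-/

lemma sum_Icc_one_min_eq_sum_range {M : Type*} [AddCommMonoid M] (f : ℕ → M) (a b : ℕ)
    (hf : ∀ j, a < j → f j = 0) :
    ∑ j ∈ Icc 1 (min a b), f j = ∑ i ∈ range b, f (i + 1) := by
  rw [sum_subset (Icc_subset_Icc_right (min_le_right a b)) fun j hj hj' => hf j (by
    simp only [mem_Icc] at hj hj'
    omega), ← Ico_add_one_right_eq_Icc, sum_Ico_eq_sum_range, Nat.add_sub_cancel]
  simp only [add_comm 1]

section MarkovPaths

variable (p00 p01 p10 p11 : ℝ)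

lemma pathWeight_eq_prod {M : ℕ} (w : Fin (M + 1) → Bool) :
    pathWeight p00 p01 p10 p11 w =
      ∏ i : Fin M, mcStep p00 p01 p10 p11 (w i.castSucc) (w i.succ) :=
  rfl

lemma pathWeight_snoc {M : ℕ} (w : Fin (M + 1) → Bool) (b : Bool) :
    pathWeight p00 p01 p10 p11 (Fin.snoc w b : Fin (M + 2) → Bool) =
      pathWeight p00 p01 p10 p11 w * mcStep p00 p01 p10 p11 (w (Fin.last M)) b := by
  rw [pathWeight_eq_prod, pathWeight_eq_prod, Fin.prod_univ_castSucc]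
  simp only [Fin.snoc_castSucc, Fin.succ_last, Fin.snoc_last, ← Fin.castSucc_succ]

lemma visitsS1_snoc {M : ℕ} (w : Fin M → Bool) (b : Bool) :
    visitsS1 (Fin.snoc w b : Fin (M + 1) → Bool) = visitsS1 w + b.toNat := by
  simp only [visitsS1, Finset.card_filter, Fin.sum_univ_castSucc, Fin.snoc_castSucc,
    Fin.snoc_last]
  cases b <;> rfl

lemma visitsS1_le {N : ℕ} (w : Fin N → Bool) : visitsS1 w ≤ N :=
  (card_filter_le _ _).trans_eq (card_fin N)

lemma visitsS1_pos {M : ℕ} {w : Fin (M + 1) → Bool} (h : w 0 = true) : 0 < visitsS1 w :=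
  card_pos.mpr ⟨0, by simp [h]⟩

def pathsFromS1 (M k : ℕ) : Finset (Fin (M + 1) → Bool) :=
  univ.filter fun w => w 0 = true ∧ visitsS1 w = k

lemma pathsFromS1_eq_empty {M k : ℕ} (hk : k = 0 ∨ M + 1 < k) : pathsFromS1 M k = ∅ := by
  refine filter_false_of_mem fun w _ ⟨h0, hw⟩ => ?_
  have := visitsS1_pos h0
  have := visitsS1_le w
  omega

noncomputable def weightSumEndingIn (M k : ℕ) (b : Bool) : ℝ :=
  ∑ w ∈ (pathsFromS1 M k).filter (fun w => w (Fin.last M) = b), pathWeight p00 p01 p10 p11 w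

lemma sum_pathsFromS1_eq_weightSumEndingIn (M k : ℕ) :
    ∑ w ∈ pathsFromS1 M k, pathWeight p00 p01 p10 p11 w =
      weightSumEndingIn p00 p01 p10 p11 M k true + weightSumEndingIn p00 p01 p10 p11 M k false := by
  simp only [weightSumEndingIn, ← Bool.not_eq_true, sum_filter_add_sum_filter_not]

lemma weightSumEndingIn_succ (M k : ℕ) (b : Bool) :
    weightSumEndingIn p00 p01 p10 p11 (M + 1) (k + b.toNat) b =
      weightSumEndingIn p00 p01 p10 p11 M k true * mcStep p00 p01 p10 p11 true b +
        weightSumEndingIn p00 p01 p10 p11 M k false * mcStep p00 p01 p10 p11 false b := by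
  have extend : weightSumEndingIn p00 p01 p10 p11 (M + 1) (k + b.toNat) b =
      ∑ w ∈ pathsFromS1 M k, pathWeight p00 p01 p10 p11 w *
        mcStep p00 p01 p10 p11 (w (Fin.last M)) b := by
    symm
    refine sum_nbij' (fun w => Fin.snoc w b) Fin.init ?_ ?_ (fun w _ => Fin.init_snoc _ _)
      ?_ (fun w _ => (pathWeight_snoc _ _ _ _ w b).symm)
    · simp +contextual [pathsFromS1, visitsS1_snoc, Fin.snoc_last]
    · intro w hw
      simp only [pathsFromS1, mem_filter, mem_univ, true_and] at hw ⊢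
      obtain ⟨⟨h0, hk⟩, hb⟩ := hw
      rw [← Fin.snoc_init_self w, visitsS1_snoc, hb] at hk
      exact ⟨h0, by omega⟩
    · intro w hw
      simp only [mem_filter] at hw
      rw [← hw.2, Fin.snoc_init_self]
  rw [extend, ← sum_filter_add_sum_filter_not _ (fun w => w (Fin.last M) = true),
    weightSumEndingIn, weightSumEndingIn, sum_mul, sum_mul]
  simp only [Bool.not_eq_true]
  congr 1 <;> exact sum_congr rfl fun w hw => by rw [(mem_filter.mp hw).2]

lemma weightSumEndingIn_succ_true (M k : ℕ) :
    weightSumEndingIn p00 p01 p10 p11 (M + 1) (k + 1) true =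
      weightSumEndingIn p00 p01 p10 p11 M k true * p11 +
        weightSumEndingIn p00 p01 p10 p11 M k false * p01 :=
  weightSumEndingIn_succ p00 p01 p10 p11 M k true

lemma weightSumEndingIn_succ_false (M k : ℕ) :
    weightSumEndingIn p00 p01 p10 p11 (M + 1) k false =
      weightSumEndingIn p00 p01 p10 p11 M k true * p10 +
        weightSumEndingIn p00 p01 p10 p11 M k false * p00 :=
  weightSumEndingIn_succ p00 p01 p10 p11 M k false

lemma weightSumEndingIn_eq_zero {M k : ℕ} (hk : k = 0 ∨ M + 1 < k) (b : Bool) :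
    weightSumEndingIn p00 p01 p10 p11 M k b = 0 := by
  simp [weightSumEndingIn, pathsFromS1_eq_empty hk]

lemma weightSumEndingIn_zero_one (b : Bool) :
    weightSumEndingIn p00 p01 p10 p11 0 1 b = if b then 1 else 0 := by
  have : (pathsFromS1 0 1).filter (fun w => w (Fin.last 0) = b) =
      if b then {fun _ => true} else ∅ := by
    cases b <;> decide
  rw [weightSumEndingIn, this]
  cases b <;> simp [pathWeight]

-- `t + 1` visits to S1 and `z` visits to S0; the summation index is one less than the number of
-- transitions S1 → S0.
noncomputable def closedFormS1 (t : ℕ) : ℕ → ℝ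
  | 0 => p11 ^ t
  | z + 1 => ∑ i ∈ range (z + 1), (t.choose (i + 1) : ℝ) * z.choose i *
      p11 ^ (t - i - 1) * p10 ^ (i + 1) * p01 ^ (i + 1) * p00 ^ (z - i)

noncomputable def closedFormS0 (t : ℕ) : ℕ → ℝ
  | 0 => 0
  | z + 1 => ∑ i ∈ range (z + 1), (t.choose i : ℝ) * z.choose i *
      p11 ^ (t - i) * p10 ^ (i + 1) * p01 ^ i * p00 ^ (z - i)

lemma closedFormS1_zero_succ (z : ℕ) : closedFormS1 p00 p01 p10 p11 0 (z + 1) = 0 := by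
  simp [closedFormS1]

lemma closedFormS1_succ (t z : ℕ) :
    closedFormS1 p00 p01 p10 p11 (t + 1) z =
      closedFormS1 p00 p01 p10 p11 t z * p11 + closedFormS0 p00 p01 p10 p11 t z * p01 := by
  cases z with
  | zero => simp [closedFormS1, closedFormS0, pow_succ]
  | succ z =>
    simp only [closedFormS1, closedFormS0, sum_mul, ← sum_add_distrib]
    refine sum_congr rfl fun i _ => ?_
    rw [Nat.choose_succ_succ', show t + 1 - i - 1 = t - i by omega]
    rcases lt_or_ge i t with hi | hi
    · rw [show t - i = t - i - 1 + 1 by omega]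
      push_cast
      ring
    · rw [Nat.choose_eq_zero_of_lt (by omega : t < i + 1)]
      push_cast
      ring

lemma closedFormS0_succ (t z : ℕ) :
    closedFormS0 p00 p01 p10 p11 t (z + 1) =
      closedFormS1 p00 p01 p10 p11 t z * p10 + closedFormS0 p00 p01 p10 p11 t z * p00 := by
  cases z with
  | zero => simp [closedFormS1, closedFormS0]
  | succ z =>
    simp only [closedFormS1, closedFormS0]
    rw [sum_range_succ', sum_range_succ, sum_range_succ _ z, sum_range_succ' _ z, add_mul, add_mul,
      sum_mul, sum_mul]
    have interior : ∀ i ∈ range z,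
        (t.choose (i + 1) : ℝ) * (z + 1).choose (i + 1) * p11 ^ (t - (i + 1)) *
            p10 ^ (i + 1 + 1) * p01 ^ (i + 1) * p00 ^ (z + 1 - (i + 1)) =
          t.choose (i + 1) * z.choose i * p11 ^ (t - i - 1) * p10 ^ (i + 1) *
              p01 ^ (i + 1) * p00 ^ (z - i) * p10 +
            t.choose (i + 1) * z.choose (i + 1) * p11 ^ (t - (i + 1)) * p10 ^ (i + 1 + 1) *
              p01 ^ (i + 1) * p00 ^ (z - (i + 1)) * p00 := by
      intro i hi
      rw [Nat.choose_succ_succ', Nat.add_sub_add_right, Nat.sub_sub,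
        show z - i = z - (i + 1) + 1 by simp at hi; omega]
      push_cast
      ring
    rw [sum_congr rfl interior, sum_add_distrib]
    simp only [Nat.choose_self, Nat.sub_self, Nat.sub_sub, Nat.choose_zero_right, Nat.sub_zero]
    push_cast
    ring

theorem weightSumEndingIn_eq_closedForm (M t z : ℕ) (htz : t + z = M) :
    weightSumEndingIn p00 p01 p10 p11 M (t + 1) true = closedFormS1 p00 p01 p10 p11 t z ∧
      weightSumEndingIn p00 p01 p10 p11 M (t + 1) false = closedFormS0 p00 p01 p10 p11 t z := by
  induction M generalizing t z with
  | zero =>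
    obtain ⟨rfl, rfl⟩ : t = 0 ∧ z = 0 := by omega
    simp [weightSumEndingIn_zero_one, closedFormS1, closedFormS0]
  | succ M ih =>
    constructor
    · cases t with
      | zero =>
        obtain ⟨z, rfl⟩ : ∃ z', z = z' + 1 := ⟨M, by omega⟩
        simp [weightSumEndingIn_succ_true, weightSumEndingIn_eq_zero,
          closedFormS1_zero_succ]
      | succ t =>
        obtain ⟨hS1, hS0⟩ := ih t z (by omega)
        rw [weightSumEndingIn_succ_true, hS1, hS0, closedFormS1_succ]
    · cases z with
      | zero =>
        have too_many : t + 1 = 0 ∨ M + 1 < t + 1 := Or.inr (by omega)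
        simp [weightSumEndingIn_succ_false, weightSumEndingIn_eq_zero p00 p01 p10 p11 too_many,
          closedFormS0]
      | succ z =>
        obtain ⟨hS1, hS0⟩ := ih t z (by omega)
        rw [weightSumEndingIn_succ_false, hS1, hS0, closedFormS0_succ]

lemma closedFormS0_eq_sum_Icc {N k : ℕ} (hk0 : 0 < k) (hkN : k < N) :
    closedFormS0 p00 p01 p10 p11 (k - 1) (N - k) =
      ∑ j ∈ Icc 1 (min k (N - k)),
        (Nat.choose (k - 1) (j - 1) : ℝ) * p11 ^ (k - j) * p10 ^ j *
          (Nat.choose (N - k - 1) (j - 1) : ℝ) * p01 ^ (j - 1) * p00 ^ (N - k - j) := by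
  obtain ⟨z, hz⟩ : ∃ z, N - k = z + 1 := ⟨N - k - 1, by omega⟩
  rw [hz, sum_Icc_one_min_eq_sum_range _ _ _ fun j hj => by
    simp [Nat.choose_eq_zero_of_lt (by omega : k - 1 < j - 1)]]
  simp only [closedFormS0, Nat.add_sub_cancel, Nat.add_sub_add_right]
  refine sum_congr rfl fun i _ => ?_
  rw [show k - (i + 1) = k - 1 - i by omega]
  ring

lemma closedFormS1_eq_sum_Icc {N k : ℕ} (hkN : k < N) :
    closedFormS1 p00 p01 p10 p11 (k - 1) (N - k) =
      ∑ j ∈ Icc 1 (min (k - 1) (N - k)),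
        (Nat.choose (k - 1) j : ℝ) * p11 ^ (k - j - 1) * p10 ^ j *
          (Nat.choose (N - k - 1) (j - 1) : ℝ) * p01 ^ j * p00 ^ (N - k - j) := by
  obtain ⟨z, hz⟩ : ∃ z, N - k = z + 1 := ⟨N - k - 1, by omega⟩
  rw [hz, sum_Icc_one_min_eq_sum_range _ _ _ fun j hj => by
    simp [Nat.choose_eq_zero_of_lt hj]]
  simp only [closedFormS1, Nat.add_sub_cancel, Nat.add_sub_add_right]
  refine sum_congr rfl fun i _ => ?_
  rw [show k - (i + 1) - 1 = k - 1 - i - 1 by omega]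
  ring

end MarkovPaths

theorem stmt0 (p00 p01 p10 p11 : ℝ) (N k : ℕ) (hk0 : 0 < k) (hkN : k < N) :
    ∑ w ∈ Finset.univ.filter (fun w : Fin N → Bool =>
        w ⟨0, by omega⟩ = true ∧ visitsS1 w = k),
      pathWeight p00 p01 p10 p11 w =
    (∑ j ∈ Finset.Icc 1 (min k (N - k)),
        (Nat.choose (k - 1) (j - 1) : ℝ) * p11 ^ (k - j) * p10 ^ j *
          (Nat.choose (N - k - 1) (j - 1) : ℝ) * p01 ^ (j - 1) * p00 ^ (N - k - j)) +
    (∑ j ∈ Finset.Icc 1 (min (k - 1) (N - k)),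
        (Nat.choose (k - 1) j : ℝ) * p11 ^ (k - j - 1) * p10 ^ j *
          (Nat.choose (N - k - 1) (j - 1) : ℝ) * p01 ^ j * p00 ^ (N - k - j)) := by
  obtain ⟨M, rfl⟩ : ∃ M, N = M + 1 := ⟨N - 1, by omega⟩
  obtain ⟨endS1, endS0⟩ :=
    weightSumEndingIn_eq_closedForm p00 p01 p10 p11 M (k - 1) (M + 1 - k) (by omega)
  rw [Nat.sub_add_cancel hk0] at endS1 endS0
  rw [← closedFormS0_eq_sum_Icc p00 p01 p10 p11 hk0 hkN,
    ← closedFormS1_eq_sum_Icc p00 p01 p10 p11 hkN, ← endS0, ← endS1]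
  exact (sum_pathsFromS1_eq_weightSumEndingIn p00 p01 p10 p11 M k).trans (add_comm _ _)
end

section
/- (Main Theorem, interior case.) Let N ≥ 1, let 0 < k < N, and let p0, p1, p00, p01, p10, p11 be real numbers. Then the sum, over all paths w : Fin N → Bool with exactly k visits to S1, of (initial probability of w(0)) times (weight of w) — where the initial probability is p1 if w(0) = true and p0 if w(0) = false — equals p1·[∑_{j=1}^{min(k,N−k)} C(k−1,j−1) p11^{k−j} p10^{j} C(N−k−1,j−1) p01^{j−1} p00^{N−k−j} + ∑_{j=1}^{min(k−1,N−k)} C(k−1,j) p11^{k−j−1} p10^{j} C(N−k−1,j−1) p01^{j} p00^{N−k−j}] + p0·[∑_{j=1}^{min(k,N−k)} C(k−1,j−1) p11^{k−j} p10^{j−1} C(N−k−1,j−1) p01^{j} p00^{N−k−j} + ∑_{j=1}^{min(k,N−k−1)} C(k−1,j−1) p11^{k−j} p10^{j} C(N−k−1,j) p01^{j} p00^{N−k−j−1}]. -/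
open Finset

lemma sum_drop (f : ℕ → ℝ) (m : ℕ) (h : f m = 0) :
    ∑ i ∈ range (m+1), f i = ∑ i ∈ range m, f i := by
  rw [Finset.sum_range_succ, h, add_zero]

section
variable (p00 p01 p10 p11 : ℝ)

def tA1 (a b i : ℕ) : ℝ := (a.choose i : ℝ) * (b.choose i : ℝ) * p11^(a-i) * p10^(i+1) * p01^i * p00^(b-i)
def tA2 (a b i : ℕ) : ℝ := (a.choose (i+1) : ℝ) * (b.choose i : ℝ) * p11^(a-(i+1)) * p10^(i+1) * p01^(i+1) * p00^(b-i)
def tB1 (a b i : ℕ) : ℝ := (a.choose i : ℝ) * (b.choose i : ℝ) * p11^(a-i) * p10^i * p01^(i+1) * p00^(b-i)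
def tB2 (a b i : ℕ) : ℝ := (a.choose i : ℝ) * (b.choose (i+1) : ℝ) * p11^(a-i) * p10^(i+1) * p01^(i+1) * p00^(b-(i+1))

def RA (a b : ℕ) : ℝ := (∑ i ∈ range (a+b+2), tA1 p00 p01 p10 p11 a b i)
  + ∑ i ∈ range (a+b+2), tA2 p00 p01 p10 p11 a b i
def RB (a b : ℕ) : ℝ := (∑ i ∈ range (a+b+2), tB1 p00 p01 p10 p11 a b i)
  + ∑ i ∈ range (a+b+2), tB2 p00 p01 p10 p11 a b i

lemma tA1_zero {a b i : ℕ} (h : a < i ∨ b < i) : tA1 p00 p01 p10 p11 a b i = 0 := by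
  rcases h with h | h <;> simp [tA1, Nat.choose_eq_zero_of_lt h]
lemma tA2_zero {a b i : ℕ} (h : a < i + 1 ∨ b < i) : tA2 p00 p01 p10 p11 a b i = 0 := by
  rcases h with h | h <;> simp [tA2, Nat.choose_eq_zero_of_lt h]
lemma tB1_zero {a b i : ℕ} (h : a < i ∨ b < i) : tB1 p00 p01 p10 p11 a b i = 0 := by
  rcases h with h | h <;> simp [tB1, Nat.choose_eq_zero_of_lt h]
lemma tB2_zero {a b i : ℕ} (h : a < i ∨ b < i + 1) : tB2 p00 p01 p10 p11 a b i = 0 := by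
  rcases h with h | h <;> simp [tB2, Nat.choose_eq_zero_of_lt h]

lemma step_tA1 (a b i : ℕ) :
    tA1 p00 p01 p10 p11 (a+1) b (i+1)
      = p11 * tA1 p00 p01 p10 p11 a b (i+1) + p10 * tB2 p00 p01 p10 p11 a b i := by
  unfold tA1 tB2
  rcases lt_or_ge i a with h | h
  · rw [show (a+1)-(i+1) = (a-(i+1))+1 from by omega, show a - i = a-(i+1)+1 from by omega,
      Nat.choose_succ_succ a i]
    push_cast
    ring
  · rw [Nat.choose_succ_succ a i, Nat.choose_eq_zero_of_lt (show a < i+1 from by omega),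
      show (a+1)-(i+1) = a - i from by omega]
    push_cast
    ring

lemma step_tA1_zero (a b : ℕ) :
    tA1 p00 p01 p10 p11 (a+1) b 0 = p11 * tA1 p00 p01 p10 p11 a b 0 := by
  unfold tA1
  simp [Nat.choose_zero_right, pow_succ]
  ring

lemma step_tA2 (a b i : ℕ) :
    tA2 p00 p01 p10 p11 (a+1) b i
      = p11 * tA2 p00 p01 p10 p11 a b i + p10 * tB1 p00 p01 p10 p11 a b i := by
  unfold tA2 tB1
  rcases lt_or_ge i a with h | h
  · rw [show (a+1)-(i+1) = (a-(i+1))+1 from by omega, show a - i = a-(i+1)+1 from by omega,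
      Nat.choose_succ_succ a i]
    push_cast
    ring
  · rw [Nat.choose_succ_succ a i, Nat.choose_eq_zero_of_lt (show a < i+1 from by omega),
      show (a+1)-(i+1) = a - i from by omega]
    push_cast
    ring

lemma step_tB1 (a b i : ℕ) :
    tB1 p00 p01 p10 p11 a (b+1) (i+1)
      = p00 * tB1 p00 p01 p10 p11 a b (i+1) + p01 * tA2 p00 p01 p10 p11 a b i := by
  unfold tB1 tA2
  rcases lt_or_ge i b with h | h
  · rw [show (b+1)-(i+1) = (b-(i+1))+1 from by omega, show b - i = b-(i+1)+1 from by omega,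
      Nat.choose_succ_succ b i]
    push_cast
    ring
  · rw [Nat.choose_succ_succ b i, Nat.choose_eq_zero_of_lt (show b < i+1 from by omega),
      show (b+1)-(i+1) = b - i from by omega]
    push_cast
    ring

lemma step_tB1_zero (a b : ℕ) :
    tB1 p00 p01 p10 p11 a (b+1) 0 = p00 * tB1 p00 p01 p10 p11 a b 0 := by
  unfold tB1
  simp [Nat.choose_zero_right, pow_succ]
  ring

lemma step_tB2 (a b i : ℕ) :
    tB2 p00 p01 p10 p11 a (b+1) i
      = p01 * tA1 p00 p01 p10 p11 a b i + p00 * tB2 p00 p01 p10 p11 a b i := by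
  unfold tB2 tA1
  rcases lt_or_ge i b with h | h
  · rw [show (b+1)-(i+1) = (b-(i+1))+1 from by omega, show b - i = b-(i+1)+1 from by omega,
      Nat.choose_succ_succ b i]
    push_cast
    ring
  · rw [Nat.choose_succ_succ b i, Nat.choose_eq_zero_of_lt (show b < i+1 from by omega),
      show (b+1)-(i+1) = b - i from by omega]
    push_cast
    ring



lemma P1 (a b : ℕ) : RA p00 p01 p10 p11 (a+1) b
    = p11 * RA p00 p01 p10 p11 a b + p10 * RB p00 p01 p10 p11 a b := by
  have e1 : ∑ i ∈ range ((a+b+2)+1), tA1 p00 p01 p10 p11 (a+1) b i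
      = p11 * ∑ i ∈ range (a+b+2), tA1 p00 p01 p10 p11 a b i
        + p10 * ∑ i ∈ range (a+b+2), tB2 p00 p01 p10 p11 a b i := by
    rw [Finset.sum_range_succ' (tA1 p00 p01 p10 p11 (a+1) b) (a+b+2)]
    rw [Finset.sum_congr rfl (fun i _ => step_tA1 p00 p01 p10 p11 a b i),
      Finset.sum_add_distrib, step_tA1_zero, ← Finset.mul_sum, ← Finset.mul_sum,
      add_right_comm, ← mul_add, ← Finset.sum_range_succ' (tA1 p00 p01 p10 p11 a b) (a+b+2),
      sum_drop _ _ (tA1_zero p00 p01 p10 p11 (Or.inl (by omega)))]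
  have e2 : ∑ i ∈ range ((a+b+2)+1), tA2 p00 p01 p10 p11 (a+1) b i
      = p11 * ∑ i ∈ range (a+b+2), tA2 p00 p01 p10 p11 a b i
        + p10 * ∑ i ∈ range (a+b+2), tB1 p00 p01 p10 p11 a b i := by
    rw [sum_drop _ _ (tA2_zero p00 p01 p10 p11 (Or.inl (by omega))),
      Finset.sum_congr rfl (fun i _ => step_tA2 p00 p01 p10 p11 a b i),
      Finset.sum_add_distrib, ← Finset.mul_sum, ← Finset.mul_sum]
  unfold RA RB
  rw [show a+1+b+2 = (a+b+2)+1 from by ring, e1, e2]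
  ring

lemma P2 (a b : ℕ) : RB p00 p01 p10 p11 a (b+1)
    = p01 * RA p00 p01 p10 p11 a b + p00 * RB p00 p01 p10 p11 a b := by
  have e1 : ∑ i ∈ range ((a+b+2)+1), tB1 p00 p01 p10 p11 a (b+1) i
      = p00 * ∑ i ∈ range (a+b+2), tB1 p00 p01 p10 p11 a b i
        + p01 * ∑ i ∈ range (a+b+2), tA2 p00 p01 p10 p11 a b i := by
    rw [Finset.sum_range_succ' (tB1 p00 p01 p10 p11 a (b+1)) (a+b+2)]
    rw [Finset.sum_congr rfl (fun i _ => step_tB1 p00 p01 p10 p11 a b i),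
      Finset.sum_add_distrib, step_tB1_zero, ← Finset.mul_sum, ← Finset.mul_sum,
      add_right_comm, ← mul_add, ← Finset.sum_range_succ' (tB1 p00 p01 p10 p11 a b) (a+b+2),
      sum_drop _ _ (tB1_zero p00 p01 p10 p11 (Or.inl (by omega)))]
  have e2 : ∑ i ∈ range ((a+b+2)+1), tB2 p00 p01 p10 p11 a (b+1) i
      = p01 * ∑ i ∈ range (a+b+2), tA1 p00 p01 p10 p11 a b i
        + p00 * ∑ i ∈ range (a+b+2), tB2 p00 p01 p10 p11 a b i := by
    rw [sum_drop _ _ (tB2_zero p00 p01 p10 p11 (Or.inl (by omega))),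
      Finset.sum_congr rfl (fun i _ => step_tB2 p00 p01 p10 p11 a b i),
      Finset.sum_add_distrib, ← Finset.mul_sum, ← Finset.mul_sum]
  unfold RA RB
  rw [show a+(b+1)+2 = (a+b+2)+1 from by ring, e1, e2]
  ring

lemma E1 (b : ℕ) : RA p00 p01 p10 p11 0 b = p10 * p00 ^ b := by
  unfold RA
  rw [Finset.sum_eq_zero (fun i _ => tA2_zero p00 p01 p10 p11 (Or.inl (by omega))), add_zero]
  rw [Finset.sum_eq_single_of_mem 0 (Finset.mem_range.2 (by omega))
    (fun i _ hne => tA1_zero p00 p01 p10 p11 (Or.inl (by omega)))]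
  simp [tA1]

lemma E2 (a : ℕ) : RB p00 p01 p10 p11 a 0 = p01 * p11 ^ a := by
  unfold RB
  rw [Finset.sum_eq_zero (fun i _ => tB2_zero p00 p01 p10 p11 (Or.inr (by omega))), add_zero]
  rw [Finset.sum_eq_single_of_mem 0 (Finset.mem_range.2 (by omega))
    (fun i _ hne => tB1_zero p00 p01 p10 p11 (Or.inr (by omega)))]
  simp [tB1]
  ring
lemma sum_extend (f : ℕ → ℝ) {m M : ℕ} (h : m ≤ M) (h0 : ∀ i, m ≤ i → f i = 0) :
    ∑ i ∈ range m, f i = ∑ i ∈ range M, f i :=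
  Finset.sum_subset (Finset.range_subset_range.2 h)
    (fun x _ hnx => h0 x (by simpa using hnx))

lemma bracketA (a b : ℕ) :
    (∑ j ∈ Icc 1 (min (a+1) (b+1)), (a.choose (j-1) : ℝ) * p11^(a+1-j) * p10^j
        * (b.choose (j-1) : ℝ) * p01^(j-1) * p00^(b+1-j))
    + (∑ j ∈ Icc 1 (min a (b+1)), (a.choose j : ℝ) * p11^(a+1-j-1) * p10^j
        * (b.choose (j-1) : ℝ) * p01^j * p00^(b+1-j))
    = RA p00 p01 p10 p11 a b := by
  rw [show Icc 1 ((a+1) ⊓ (b+1)) = Ico 1 ((a+1) ⊓ (b+1) + 1) from (Finset.Ico_add_one_right_eq_Icc _ _).symm,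
    show Icc 1 (a ⊓ (b+1)) = Ico 1 (a ⊓ (b+1) + 1) from (Finset.Ico_add_one_right_eq_Icc _ _).symm,
    Finset.sum_Ico_eq_sum_range, Finset.sum_Ico_eq_sum_range]
  simp only [Nat.add_sub_cancel]
  unfold RA
  congr 1
  · refine (Finset.sum_congr rfl fun i _ => ?_).trans
      (sum_extend (tA1 p00 p01 p10 p11 a b) (by omega)
        (fun i hi => tA1_zero p00 p01 p10 p11 (by omega)))
    rw [show 1+i-1 = i from by omega, show a+1-(1+i) = a-i from by omega,
      show b+1-(1+i) = b-i from by omega, show 1+i = i+1 from by omega]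
    unfold tA1; ring
  · refine (Finset.sum_congr rfl fun i _ => ?_).trans
      (sum_extend (tA2 p00 p01 p10 p11 a b) (by omega)
        (fun i hi => tA2_zero p00 p01 p10 p11 (by omega)))
    rw [show 1+i-1 = i from by omega, show a+1-(1+i)-1 = a-(i+1) from by omega,
      show b+1-(1+i) = b-i from by omega, show 1+i = i+1 from by omega]
    unfold tA2; ring

lemma bracketB (a b : ℕ) :
    (∑ j ∈ Icc 1 (min (a+1) (b+1)), (a.choose (j-1) : ℝ) * p11^(a+1-j) * p10^(j-1)
        * (b.choose (j-1) : ℝ) * p01^j * p00^(b+1-j))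
    + (∑ j ∈ Icc 1 (min (a+1) b), (a.choose (j-1) : ℝ) * p11^(a+1-j) * p10^j
        * (b.choose j : ℝ) * p01^j * p00^(b+1-j-1))
    = RB p00 p01 p10 p11 a b := by
  rw [show Icc 1 ((a+1) ⊓ (b+1)) = Ico 1 ((a+1) ⊓ (b+1) + 1) from (Finset.Ico_add_one_right_eq_Icc _ _).symm,
    show Icc 1 ((a+1) ⊓ b) = Ico 1 ((a+1) ⊓ b + 1) from (Finset.Ico_add_one_right_eq_Icc _ _).symm,
    Finset.sum_Ico_eq_sum_range, Finset.sum_Ico_eq_sum_range]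
  simp only [Nat.add_sub_cancel]
  unfold RB
  congr 1
  · refine (Finset.sum_congr rfl fun i _ => ?_).trans
      (sum_extend (tB1 p00 p01 p10 p11 a b) (by omega)
        (fun i hi => tB1_zero p00 p01 p10 p11 (by omega)))
    rw [show 1+i-1 = i from by omega, show a+1-(1+i) = a-i from by omega,
      show b+1-(1+i) = b-i from by omega, show 1+i = i+1 from by omega]
    unfold tB1; ring
  · refine (Finset.sum_congr rfl fun i _ => ?_).trans
      (sum_extend (tB2 p00 p01 p10 p11 a b) (by omega)
        (fun i hi => tB2_zero p00 p01 p10 p11 (by omega)))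
    rw [show 1+i-1 = i from by omega, show a+1-(1+i) = a-i from by omega,
      show b+1-(1+i)-1 = b-(i+1) from by omega, show 1+i = i+1 from by omega]
    unfold tB2; ring
lemma pathWeight_eq (p00 p01 p10 p11 : ℝ) {n : ℕ} (w : Fin (n+1) → Bool) :
    pathWeight p00 p01 p10 p11 w
      = ∏ i : Fin n, mcStep p00 p01 p10 p11 (w ⟨i.val, by omega⟩) (w ⟨i.val+1, by omega⟩) := rfl

lemma pathWeight_cons (p00 p01 p10 p11 : ℝ) {n : ℕ} (s : Bool) (v : Fin (n+1) → Bool) :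
    pathWeight p00 p01 p10 p11 (Fin.cons s v : Fin (n+2) → Bool)
      = mcStep p00 p01 p10 p11 s (v 0) * pathWeight p00 p01 p10 p11 v := by
  rw [pathWeight_eq, pathWeight_eq, Fin.prod_univ_succ]
  rfl

lemma visitsS1_cons {n : ℕ} (s : Bool) (v : Fin (n+1) → Bool) :
    visitsS1 (Fin.cons s v : Fin (n+2) → Bool) = (if s then 1 else 0) + visitsS1 v := by
  unfold visitsS1
  rw [Finset.card_filter, Finset.card_filter, Fin.sum_univ_succ, Fin.cons_zero]
  simp [Fin.cons_succ]

noncomputable def Fsum (p00 p01 p10 p11 : ℝ) (n k : ℕ) (s : Bool) : ℝ :=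
  ∑ w ∈ Finset.univ.filter (fun w : Fin (n+1) → Bool => visitsS1 w = k ∧ w 0 = s),
    pathWeight p00 p01 p10 p11 w

lemma Fsum_decomp (p00 p01 p10 p11 : ℝ) (n k : ℕ) (s : Bool) :
    Fsum p00 p01 p10 p11 (n+1) k s
      = ∑ v : Fin (n+1) → Bool, (if (if s then 1 else 0) + visitsS1 v = k then
          mcStep p00 p01 p10 p11 s (v 0) * pathWeight p00 p01 p10 p11 v else 0) := by
  unfold Fsum
  rw [Finset.sum_filter]
  rw [← (Fin.consEquiv (fun _ : Fin (n+2) => Bool)).sum_comp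
      (fun w : Fin (n+2) → Bool => if visitsS1 w = k ∧ w 0 = s then pathWeight p00 p01 p10 p11 w else 0)]
  rw [Fintype.sum_prod_type]
  rw [Fintype.sum_bool]
  cases s <;> simp [Fin.consEquiv, visitsS1_cons, pathWeight_cons]

lemma Fsum_eq_ite (p00 p01 p10 p11 : ℝ) (n k : ℕ) (s : Bool) :
    Fsum p00 p01 p10 p11 n k s
      = ∑ v : Fin (n+1) → Bool, (if visitsS1 v = k ∧ v 0 = s then pathWeight p00 p01 p10 p11 v else 0) := by
  unfold Fsum; rw [Finset.sum_filter]

lemma Fsum_succ_true (p00 p01 p10 p11 : ℝ) (n k : ℕ) :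
    Fsum p00 p01 p10 p11 (n+1) (k+1) true
      = p11 * Fsum p00 p01 p10 p11 n k true + p10 * Fsum p00 p01 p10 p11 n k false := by
  rw [Fsum_decomp, Fsum_eq_ite, Fsum_eq_ite, Finset.mul_sum, Finset.mul_sum,
    ← Finset.sum_add_distrib]
  apply Finset.sum_congr rfl
  intro v _
  by_cases hk : visitsS1 v = k <;> cases hv : v 0 <;> simp [hk, hv, mcStep] <;> omega

lemma Fsum_succ_false (p00 p01 p10 p11 : ℝ) (n k : ℕ) :
    Fsum p00 p01 p10 p11 (n+1) k false
      = p01 * Fsum p00 p01 p10 p11 n k true + p00 * Fsum p00 p01 p10 p11 n k false := by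
  rw [Fsum_decomp, Fsum_eq_ite, Fsum_eq_ite, Finset.mul_sum, Finset.mul_sum,
    ← Finset.sum_add_distrib]
  apply Finset.sum_congr rfl
  intro v _
  by_cases hk : visitsS1 v = k <;> cases hv : v 0 <;> simp [hk, hv, mcStep] <;> omega

lemma visitsS1_ne_zero {n : ℕ} (v : Fin (n+1) → Bool) (h : v 0 = true) : visitsS1 v ≠ 0 := by
  unfold visitsS1
  intro hc
  rw [Finset.card_eq_zero] at hc
  have : (0 : Fin (n+1)) ∈ Finset.univ.filter (fun i => v i = true) := by simp [h]
  rw [hc] at this; exact absurd this (Finset.notMem_empty _)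

lemma visitsS1_lt_top {n : ℕ} (v : Fin (n+1) → Bool) (h : v 0 = false) : visitsS1 v ≠ n+1 := by
  unfold visitsS1
  intro hc
  have huniv : (Finset.univ.filter (fun i : Fin (n+1) => v i = true)) = Finset.univ := by
    apply Finset.eq_univ_of_card; simpa using hc
  have : (0 : Fin (n+1)) ∈ Finset.univ.filter (fun i : Fin (n+1) => v i = true) := by
    rw [huniv]; exact Finset.mem_univ _
  simp [h] at this

lemma Fsum_true_zero (p00 p01 p10 p11 : ℝ) (n : ℕ) : Fsum p00 p01 p10 p11 n 0 true = 0 := by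
  rw [Fsum_eq_ite]
  apply Finset.sum_eq_zero
  intro v _
  rw [if_neg]
  rintro ⟨h1, h2⟩
  exact visitsS1_ne_zero v h2 h1

lemma Fsum_false_top (p00 p01 p10 p11 : ℝ) (n : ℕ) : Fsum p00 p01 p10 p11 n (n+1) false = 0 := by
  rw [Fsum_eq_ite]
  apply Finset.sum_eq_zero
  intro v _
  rw [if_neg]
  rintro ⟨h1, h2⟩
  exact visitsS1_lt_top v (by simpa using h2) h1

lemma Fsum_base_true (p00 p01 p10 p11 : ℝ) : Fsum p00 p01 p10 p11 0 1 true = 1 := by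
  rw [Fsum_eq_ite]
  rw [← (Equiv.funUnique (Fin 1) Bool).symm.sum_comp]
  rw [Fintype.sum_bool]
  simp [Equiv.funUnique, visitsS1, pathWeight]

lemma Fsum_base_false (p00 p01 p10 p11 : ℝ) : Fsum p00 p01 p10 p11 0 0 false = 1 := by
  rw [Fsum_eq_ite]
  rw [← (Equiv.funUnique (Fin 1) Bool).symm.sum_comp]
  rw [Fintype.sum_bool]
  simp [Equiv.funUnique, visitsS1, pathWeight]

lemma Fsum_all_true (p00 p01 p10 p11 : ℝ) (n : ℕ) :
    Fsum p00 p01 p10 p11 n (n+1) true = p11 ^ n := by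
  induction n with
  | zero => simpa using Fsum_base_true p00 p01 p10 p11
  | succ m ih =>
      rw [Fsum_succ_true, ih, Fsum_false_top]
      ring

lemma Fsum_all_false (p00 p01 p10 p11 : ℝ) (n : ℕ) :
    Fsum p00 p01 p10 p11 n 0 false = p00 ^ n := by
  induction n with
  | zero => simpa using Fsum_base_false p00 p01 p10 p11
  | succ m ih =>
      rw [Fsum_succ_false, ih, Fsum_true_zero]
      ring

lemma Fsum_interior (p00 p01 p10 p11 : ℝ) (n : ℕ) : ∀ k, 1 ≤ k → k ≤ n →
    Fsum p00 p01 p10 p11 n k true = RA p00 p01 p10 p11 (k-1) (n-k) ∧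
    Fsum p00 p01 p10 p11 n k false = RB p00 p01 p10 p11 (k-1) (n-k) := by
  induction n with
  | zero => intro k h1 h2; omega
  | succ n ih =>
    intro k h1 h2
    constructor
    · obtain ⟨j, rfl⟩ : ∃ j, k = j + 1 := ⟨k-1, by omega⟩
      rw [Fsum_succ_true]
      rcases Nat.eq_zero_or_pos j with rfl | hj
      · rw [Fsum_true_zero, Fsum_all_false]
        rw [show n+1-(0+1) = n from by omega, show (0+1:ℕ)-1 = 0 from by omega, E1]
        ring
      · obtain ⟨a, rfl⟩ : ∃ a, j = a + 1 := ⟨j-1, by omega⟩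
        obtain ⟨ha1, ha2⟩ := ih (a+1) (by omega) (by omega)
        rw [ha1, ha2]
        simp only [Nat.add_sub_cancel]
        rw [show n+1-(a+1+1) = n-(a+1) from by omega]
        exact (P1 p00 p01 p10 p11 a (n-(a+1))).symm
    · rw [Fsum_succ_false]
      rcases Nat.lt_or_ge k (n+1) with hk | hk
      · obtain ⟨ha1, ha2⟩ := ih k (by omega) (by omega)
        rw [ha1, ha2]
        rw [show n+1-k = (n-k)+1 from by omega]
        exact (P2 p00 p01 p10 p11 (k-1) (n-k)).symm
      · have hk' : k = n+1 := by omega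
        subst hk'
        rw [Fsum_all_true, Fsum_false_top]
        simp only [Nat.add_sub_cancel, Nat.sub_self]
        rw [E2]
        ring

theorem stmt6 (p0 p1 p00 p01 p10 p11 : ℝ) (N k : ℕ) (hN : 1 ≤ N) (hk0 : 0 < k) (hkN : k < N) :
    ∑ w ∈ Finset.univ.filter (fun w : Fin N → Bool => visitsS1 w = k),
      (if w ⟨0, by omega⟩ = true then p1 else p0) * pathWeight p00 p01 p10 p11 w =
    p1 * ((∑ j ∈ Finset.Icc 1 (min k (N - k)),
        (Nat.choose (k - 1) (j - 1) : ℝ) * p11 ^ (k - j) * p10 ^ j *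
          (Nat.choose (N - k - 1) (j - 1) : ℝ) * p01 ^ (j - 1) * p00 ^ (N - k - j)) +
      (∑ j ∈ Finset.Icc 1 (min (k - 1) (N - k)),
        (Nat.choose (k - 1) j : ℝ) * p11 ^ (k - j - 1) * p10 ^ j *
          (Nat.choose (N - k - 1) (j - 1) : ℝ) * p01 ^ j * p00 ^ (N - k - j))) +
    p0 * ((∑ j ∈ Finset.Icc 1 (min k (N - k)),
        (Nat.choose (k - 1) (j - 1) : ℝ) * p11 ^ (k - j) * p10 ^ (j - 1) *
          (Nat.choose (N - k - 1) (j - 1) : ℝ) * p01 ^ j * p00 ^ (N - k - j)) +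
      (∑ j ∈ Finset.Icc 1 (min k (N - k - 1)),
        (Nat.choose (k - 1) (j - 1) : ℝ) * p11 ^ (k - j) * p10 ^ j *
          (Nat.choose (N - k - 1) j : ℝ) * p01 ^ j * p00 ^ (N - k - j - 1))) := by
  obtain ⟨a, rfl⟩ : ∃ a, k = a + 1 := ⟨k-1, by omega⟩
  obtain ⟨b, rfl⟩ : ∃ b, N = (a+1+b) + 1 := ⟨N-a-2, by omega⟩
  have hL : ∑ w ∈ Finset.univ.filter (fun w : Fin ((a+1+b)+1) → Bool => visitsS1 w = a+1),
      (if w ⟨0, by omega⟩ = true then p1 else p0) * pathWeight p00 p01 p10 p11 w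
      = p1 * Fsum p00 p01 p10 p11 (a+1+b) (a+1) true
        + p0 * Fsum p00 p01 p10 p11 (a+1+b) (a+1) false := by
    rw [Fsum_eq_ite, Fsum_eq_ite, Finset.mul_sum, Finset.mul_sum,
      ← Finset.sum_add_distrib, Finset.sum_filter]
    apply Finset.sum_congr rfl
    intro w _
    by_cases h : visitsS1 w = a+1 <;> cases hw : w 0 <;>
      simp [h, hw, Fin.mk_zero]
  rw [hL]
  obtain ⟨h1, h2⟩ := Fsum_interior p00 p01 p10 p11 (a+1+b) (a+1) (by omega) (by omega)
  rw [h1, h2]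
  simp only [Nat.add_sub_cancel, show a+1+b-(a+1) = b from by omega,
    show a+1+b+1-(a+1) = b+1 from by omega, show b+1-1 = b from by omega]
  rw [← bracketA p00 p01 p10 p11 a b, ← bracketB p00 p01 p10 p11 a b]
end
end

section
/- Let N ≥ 2, 0 < k < N, and 1 ≤ j. The number of paths w : Fin N → Bool with w(0) = true, w(N−1) = true, exactly k visits to S1, and exactly j descents equals C(k−1, j)·C(N−k−1, j−1). (Such a path consists of j+1 maximal blocks of trues and j maximal blocks of falses; distributing k trues over j+1 nonempty blocks and N−k falses over j nonempty blocks gives the two weak-composition counts.) -/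
open Finset

/-- number of compositions of `m` into `r` positive parts -/
def comp' (m r : ℕ) : ℕ :=
  if m = 0 then (if r = 0 then 1 else 0)
  else if r = 0 then 0 else Nat.choose (m - 1) (r - 1)

lemma comp'_pascal (m r : ℕ) (hm : 1 ≤ m) (hr : 1 ≤ r) :
    comp' m r = comp' (m - 1) r + comp' (m - 1) (r - 1) := by
  rcases Nat.lt_or_ge m 2 with hm2 | hm2
  · interval_cases m
    rcases Nat.lt_or_ge r 2 with hr2 | hr2
    · interval_cases r <;> simp [comp']
    · obtain ⟨b, rfl⟩ : ∃ b, r = b + 2 := ⟨r - 2, by omega⟩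
      simp [comp']
  · obtain ⟨a, rfl⟩ : ∃ a, m = a + 2 := ⟨m - 2, by omega⟩
    rcases Nat.lt_or_ge r 2 with hr2 | hr2
    · interval_cases r <;> simp [comp']
    · obtain ⟨b, rfl⟩ : ∃ b, r = b + 2 := ⟨r - 2, by omega⟩
      simp [comp', Nat.choose_succ_succ, Nat.add_comm]

def cnt (M k j : ℕ) (b : Bool) : ℕ :=
  ((Finset.univ : Finset (Fin (M + 1) → Bool)).filter fun w =>
    w ⟨0, by omega⟩ = true ∧ w ⟨M, by omega⟩ = b ∧
    visitsS1 w = k ∧ descents w = j).card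

lemma snoc_mk_lt {M : ℕ} (w : Fin (M + 1) → Bool) (b : Bool) (t : ℕ) (h : t < M + 1)
    (h2 : t < M + 2) :
    (Fin.snoc w b : Fin (M + 2) → Bool) ⟨t, h2⟩ = w ⟨t, h⟩ := by
  have : (⟨t, h2⟩ : Fin (M + 2)) = Fin.castSucc ⟨t, h⟩ := rfl
  rw [this, Fin.snoc_castSucc]

lemma snoc_mk_last {M : ℕ} (w : Fin (M + 1) → Bool) (b : Bool) (h2 : M + 1 < M + 2) :
    (Fin.snoc w b : Fin (M + 2) → Bool) ⟨M + 1, h2⟩ = b := by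
  have : (⟨M + 1, h2⟩ : Fin (M + 2)) = Fin.last (M + 1) := rfl
  rw [this, Fin.snoc_last]

lemma visits_snoc {M : ℕ} (w : Fin (M + 1) → Bool) (b : Bool) :
    visitsS1 (Fin.snoc w b : Fin (M + 2) → Bool) =
      visitsS1 w + (if b then 1 else 0) := by
  rw [visitsS1, visitsS1, Finset.card_filter, Finset.card_filter,
    Fin.sum_univ_castSucc]
  simp [Fin.snoc_castSucc, Fin.snoc_last]

lemma descents_snoc {M : ℕ} (w : Fin (M + 1) → Bool) (b : Bool) :
    descents (Fin.snoc w b : Fin (M + 2) → Bool) =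
      descents w + (if w ⟨M, by omega⟩ = true ∧ b = false then 1 else 0) := by
  rw [descents, descents, Finset.card_filter, Finset.card_filter]
  show (∑ i : Fin (M + 1), if (Fin.snoc w b : Fin (M + 2) → Bool) ⟨i.val, by omega⟩ = true ∧
      (Fin.snoc w b : Fin (M + 2) → Bool) ⟨i.val + 1, by omega⟩ = false then 1 else 0) =
    (∑ i : Fin M, if w ⟨i.val, by omega⟩ = true ∧ w ⟨i.val + 1, by omega⟩ = false
      then 1 else 0) + (if w ⟨M, by omega⟩ = true ∧ b = false then 1 else 0)
  rw [Fin.sum_univ_castSucc]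
  simp only [Fin.coe_castSucc, Fin.val_last]
  congr 1
  · apply Finset.sum_congr rfl
    intro i _
    apply if_congr _ rfl rfl
    rw [snoc_mk_lt w b i.val (by omega) (by omega),
      snoc_mk_lt w b (i.val + 1) (by omega) (by omega)]
  · apply if_congr _ rfl rfl
    rw [snoc_mk_lt w b M (by omega) (by omega), snoc_mk_last w b (by omega)]

lemma cnt_succ (M k j : ℕ) (b : Bool) :
    cnt (M + 1) k j b = ∑ w : Fin (M + 1) → Bool,
      ((if (w ⟨0, by omega⟩ = true ∧ true = b ∧ visitsS1 w + 1 = k ∧ descents w = j)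
          then 1 else 0) +
       (if (w ⟨0, by omega⟩ = true ∧ false = b ∧ visitsS1 w = k ∧
            descents w + (if w ⟨M, by omega⟩ = true then 1 else 0) = j) then 1 else 0)) := by
  rw [cnt, Finset.card_filter,
    ← Equiv.sum_comp (Fin.snocEquiv (fun _ => Bool)) _, Fintype.sum_prod_type,
    Fintype.sum_bool, ← Finset.sum_add_distrib]
  apply Finset.sum_congr rfl
  intro w _
  have hs : ∀ b' : Bool, ((Fin.snocEquiv fun _ => Bool) (b', w) : Fin (M + 2) → Bool)
      = Fin.snoc w b' := by
    intro b'; funext i; rfl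
  congr 1
  · apply if_congr _ rfl rfl
    rw [hs, snoc_mk_lt w true 0 (by omega) (by omega),
      snoc_mk_last w true (by omega), visits_snoc, descents_snoc]
    simp
  · apply if_congr _ rfl rfl
    rw [hs, snoc_mk_lt w false 0 (by omega) (by omega),
      snoc_mk_last w false (by omega), visits_snoc, descents_snoc]
    simp

lemma cnt_as_sum (M k j : ℕ) (b : Bool) :
    cnt M k j b = ∑ w : Fin (M + 1) → Bool,
      (if (w ⟨0, by omega⟩ = true ∧ w ⟨M, by omega⟩ = b ∧ visitsS1 w = k ∧ descents w = j)
        then 1 else 0) := by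
  rw [cnt, Finset.card_filter]

lemma cnt_succ_true (M k j : ℕ) :
    cnt (M + 1) (k + 1) j true = cnt M k j true + cnt M k j false := by
  rw [cnt_succ, cnt_as_sum, cnt_as_sum, ← Finset.sum_add_distrib]
  apply Finset.sum_congr rfl
  intro w _
  by_cases h0 : w ⟨0, by omega⟩ = true <;>
    by_cases hl : w ⟨M, by omega⟩ = true <;>
      simp [h0, hl]

lemma cnt_zero_true (M j : ℕ) : cnt (M + 1) 0 j true = 0 := by
  rw [cnt_succ]
  apply Finset.sum_eq_zero
  intro w _
  simp

lemma cnt_succ_false (M k j : ℕ) :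
    cnt (M + 1) k (j + 1) false = cnt M k j true + cnt M k (j + 1) false := by
  rw [cnt_succ, cnt_as_sum, cnt_as_sum, ← Finset.sum_add_distrib]
  apply Finset.sum_congr rfl
  intro w _
  by_cases h0 : w ⟨0, by omega⟩ = true <;>
    by_cases hl : w ⟨M, by omega⟩ = true <;>
      simp [h0, hl]

lemma cnt_succ_false_zero (M k : ℕ) :
    cnt (M + 1) k 0 false = cnt M k 0 false := by
  rw [cnt_succ, cnt_as_sum]
  apply Finset.sum_congr rfl
  intro w _
  by_cases h0 : w ⟨0, by omega⟩ = true <;>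
    by_cases hl : w ⟨M, by omega⟩ = true <;>
      simp [h0, hl]

lemma visits_const (b : Bool) : visitsS1 (fun _ : Fin 1 => b) = if b then 1 else 0 := by
  cases b <;> simp [visitsS1]

lemma descents_one (w : Fin 1 → Bool) : descents w = 0 := by
  simp [descents]

lemma cnt_base_true (k j : ℕ) : cnt 0 k j true = if k = 1 ∧ j = 0 then 1 else 0 := by
  rw [cnt_as_sum, ← Equiv.sum_comp (Equiv.funUnique (Fin 1) Bool).symm, Fintype.sum_bool]
  simp only [Equiv.funUnique_symm_apply, visits_const, descents_one]
  simp [eq_comm, and_comm,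
    show visitsS1 (uniqueElim true : Fin 1 → Bool) = 1 from by decide]

lemma cnt_base_false (k j : ℕ) : cnt 0 k j false = 0 := by
  rw [cnt_as_sum, ← Equiv.sum_comp (Equiv.funUnique (Fin 1) Bool).symm, Fintype.sum_bool]
  simp [Equiv.funUnique]

lemma cnt_false_big (M k j : ℕ) (hk : M + 1 ≤ k) : cnt M k j false = 0 := by
  rw [cnt, Finset.card_eq_zero, Finset.filter_eq_empty_iff]
  intro w _
  rintro ⟨h0, hl, hv, -⟩
  have hsub : (Finset.univ.filter fun i : Fin (M + 1) => w i = true) ⊆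
      Finset.univ.erase ⟨M, by omega⟩ := by
    intro i hi
    simp only [Finset.mem_filter] at hi
    refine Finset.mem_erase.mpr ⟨?_, Finset.mem_univ _⟩
    rintro rfl
    simp [hi.2] at hl
  have := Finset.card_le_card hsub
  rw [Finset.card_erase_of_mem (Finset.mem_univ _)] at this
  simp only [Finset.card_univ, Fintype.card_fin] at this
  rw [visitsS1] at hv
  omega

lemma closed (M : ℕ) :
    (∀ k j, k ≤ M + 1 → cnt M k j true = comp' k (j + 1) * comp' (M + 1 - k) j) ∧
    (∀ k j, cnt M k j false = comp' k j * comp' (M + 1 - k) j) := by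
  induction M with
  | zero =>
    constructor
    · intro k j hk
      rw [cnt_base_true]
      interval_cases k
      · simp [comp']
      · rcases Nat.eq_zero_or_pos j with rfl | hj
        · simp [comp']
        · simp [comp', hj.ne']
    · intro k j
      rw [cnt_base_false]
      rcases Nat.eq_zero_or_pos j with rfl | hj
      · match k with
        | 0 => simp [comp']
        | k + 1 => simp [comp']
      · match k with
        | 0 => simp [comp', hj.ne']
        | 1 => simp [comp', hj.ne']
        | k + 2 => simp [comp', hj.ne', show 1 - (k + 2) = 0 by omega]
  | succ M ih =>
    obtain ⟨ihA, ihB⟩ := ih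
    constructor
    · intro k j hk
      match k with
      | 0 => rw [cnt_zero_true]; simp [comp']
      | k + 1 =>
        rw [cnt_succ_true, ihA k j (by omega), ihB k j]
        have hp : comp' (k + 1) (j + 1) = comp' k (j + 1) + comp' k j := by
          simpa using comp'_pascal (k + 1) (j + 1) (by omega) (by omega)
        rw [show M + 1 + 1 - (k + 1) = M + 1 - k by omega, hp, add_mul]
    · intro k j
      by_cases hk : M + 2 ≤ k
      · rw [cnt_false_big _ _ _ (by omega), show M + 1 + 1 - k = 0 by omega]
        match k, j with
        | k, 0 => match k with
          | k + 1 => simp [comp']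
        | k, j + 1 => simp [comp']
      · match j with
        | 0 =>
          rw [cnt_succ_false_zero, ihB k 0]
          match k with
          | 0 => simp [comp']
          | k + 1 => simp [comp']
        | j + 1 =>
          rw [cnt_succ_false, ihA k j (by omega), ihB k (j + 1)]
          have hp : comp' (M + 1 + 1 - k) (j + 1) =
              comp' (M + 1 - k) (j + 1) + comp' (M + 1 - k) j := by
            have h := comp'_pascal (M + 2 - k) (j + 1) (by omega) (by omega)
            simpa [show M + 2 - k - 1 = M + 1 - k by omega,
              show M + 1 + 1 - k = M + 2 - k by omega] using h
          rw [hp, mul_add, add_comm]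

theorem stmt9 (N k j : ℕ) (hN : 2 ≤ N) (hk0 : 0 < k) (hkN : k < N) (hj : 1 ≤ j) :
    (Finset.univ.filter (fun w : Fin N → Bool =>
        w ⟨0, by omega⟩ = true ∧ w ⟨N - 1, by omega⟩ = true ∧
        visitsS1 w = k ∧ descents w = j)).card =
    Nat.choose (k - 1) j * Nat.choose (N - k - 1) (j - 1) := by
  obtain ⟨M, rfl⟩ : ∃ M, N = M + 2 := ⟨N - 2, by omega⟩
  have hk' : k ≤ M + 1 + 1 := by omega
  have h1 : comp' k (j + 1) = Nat.choose (k - 1) j := by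
    simp [comp', hk0.ne']
  have h2 : comp' (M + 1 + 1 - k) j = Nat.choose (M + 2 - k - 1) (j - 1) := by
    have hA : ¬ (M + 1 + 1 - k = 0) := by omega
    have hB : ¬ (j = 0) := by omega
    have hC : M + 1 + 1 - k - 1 = M + 2 - k - 1 := by omega
    unfold comp'
    rw [if_neg hA, if_neg hB, hC]
  have hmain := (closed (M + 1)).1 k j hk'
  rw [h1, h2] at hmain
  exact hmain
end

section
/- (Part Y of the proof of Theorem 1.) Let N ≥ 2 and 0 < k < N. Then the sum, over all paths w : Fin N → Bool with w(0) = true, w(N−1) = true, and exactly k visits to S1, of the weight of w equals ∑_{j=1}^{min(k−1, N−k)} C(k−1, j)·p11^{k−j−1}·p10^{j}·C(N−k−1, j−1)·p01^{j}·p00^{N−k−j}. -/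
open Finset

namespace Stmt13
variable (p00 p01 p10 p11 : ℝ)

lemma snoc_cast {N : ℕ} (u : Fin (N+1) → Bool) (b : Bool) (j : ℕ) (h : j < N+1) :
    (Fin.snoc u b : Fin (N+2) → Bool) ⟨j, by omega⟩ = u ⟨j, h⟩ := by
  have : (⟨j, by omega⟩ : Fin (N+2)) = Fin.castSucc ⟨j, h⟩ := rfl
  rw [this, Fin.snoc_castSucc]

lemma visits_snoc {N : ℕ} (u : Fin (N+1) → Bool) (b : Bool) :
    visitsS1 (Fin.snoc u b : Fin (N+2) → Bool) = visitsS1 u + (if b then 1 else 0) := by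
  unfold visitsS1
  rw [Finset.card_filter, Finset.card_filter, Fin.sum_univ_castSucc]
  simp [Fin.snoc_castSucc]

lemma weight_snoc {N : ℕ} (u : Fin (N+1) → Bool) (b : Bool) :
    pathWeight p00 p01 p10 p11 (Fin.snoc u b : Fin (N+2) → Bool)
      = pathWeight p00 p01 p10 p11 u * mcStep p00 p01 p10 p11 (u (Fin.last N)) b := by
  show (∏ i : Fin (N+1), mcStep p00 p01 p10 p11
      ((Fin.snoc u b : Fin (N+2) → Bool) ⟨i.val, by omega⟩)
      ((Fin.snoc u b : Fin (N+2) → Bool) ⟨i.val + 1, by omega⟩)) = _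
  rw [Fin.prod_univ_castSucc]
  congr 1
  · show _ = ∏ i : Fin N, mcStep p00 p01 p10 p11 (u ⟨i.val, by omega⟩) (u ⟨i.val+1, by omega⟩)
    apply Finset.prod_congr rfl
    intro i _
    rw [show ((⟨(i.castSucc : Fin (N+1)).val, by omega⟩ : Fin (N+2))) = (⟨i.val, by omega⟩ : Fin (N+2)) from rfl,
        show ((⟨(i.castSucc : Fin (N+1)).val + 1, by omega⟩ : Fin (N+2))) = (⟨i.val + 1, by omega⟩ : Fin (N+2)) from rfl,
        snoc_cast u b i.val (by omega), snoc_cast u b (i.val+1) (by omega)]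
  · rw [show ((⟨(Fin.last N).val, by omega⟩ : Fin (N+2))) = (⟨N, by omega⟩ : Fin (N+2)) from rfl,
        show ((⟨(Fin.last N).val + 1, by omega⟩ : Fin (N+2))) = (⟨N+1, by omega⟩ : Fin (N+2)) from rfl,
        snoc_cast u b N (by omega)]
    have : (⟨N+1, by omega⟩ : Fin (N+2)) = Fin.last (N+1) := rfl
    rw [this, Fin.snoc_last]
    rfl

end Stmt13

namespace Stmt13
variable (p00 p01 p10 p11 : ℝ)

noncomputable def S (b : Bool) (N k : ℕ) : ℝ :=
  ∑ w ∈ Finset.univ.filter (fun w : Fin (N+1) → Bool =>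
      w 0 = true ∧ w (Fin.last N) = b ∧ visitsS1 w = k),
    pathWeight p00 p01 p10 p11 w

def snocEquiv (N : ℕ) : (Fin (N+1) → Bool) × Bool ≃ (Fin (N+2) → Bool) where
  toFun p := Fin.snoc p.1 p.2
  invFun w := (Fin.init w, w (Fin.last (N+1)))
  left_inv p := by simp [Fin.init_snoc, Fin.snoc_last]
  right_inv w := by simp [Fin.snoc_init_self]

lemma S_rec (b : Bool) (N k : ℕ) :
    S p00 p01 p10 p11 b (N+1) k =
      ∑ u : Fin (N+1) → Bool,
        (if u 0 = true ∧ visitsS1 u + (if b then 1 else 0) = k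
          then pathWeight p00 p01 p10 p11 u * mcStep p00 p01 p10 p11 (u (Fin.last N)) b
          else 0) := by
  unfold S
  rw [Finset.sum_filter, ← Equiv.sum_comp (snocEquiv N)]
  rw [Fintype.sum_prod_type]
  apply Finset.sum_congr rfl
  intro u _
  rw [Fintype.sum_bool]
  have h0 : ∀ c : Bool, (Fin.snoc u c : Fin (N+2) → Bool) 0 = u 0 := by
    intro c
    have : (0 : Fin (N+2)) = Fin.castSucc 0 := rfl
    rw [this, Fin.snoc_castSucc]
  have hl : ∀ c : Bool, (Fin.snoc u c : Fin (N+2) → Bool) (Fin.last (N+1)) = c := by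
    intro c; exact Fin.snoc_last _ _
  cases b
  · simp only [snocEquiv, Equiv.coe_fn_mk, h0, hl, visits_snoc, weight_snoc]
    simp
  · simp only [snocEquiv, Equiv.coe_fn_mk, h0, hl, visits_snoc, weight_snoc]
    simp

lemma S_rec_true (N k : ℕ) (hk : 1 ≤ k) :
    S p00 p01 p10 p11 true (N+1) k
      = p11 * S p00 p01 p10 p11 true N (k-1) + p01 * S p00 p01 p10 p11 false N (k-1) := by
  rw [S_rec]
  unfold S
  rw [Finset.sum_filter, Finset.sum_filter, Finset.mul_sum, Finset.mul_sum,
      ← Finset.sum_add_distrib]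
  apply Finset.sum_congr rfl
  intro u _
  have hiff : (visitsS1 u + 1 = k) ↔ (visitsS1 u = k - 1) := by omega
  cases hu : u (Fin.last N) <;> by_cases h0 : u 0 = true <;>
    by_cases hv : visitsS1 u = k - 1 <;>
    simp [hu, h0, hv, hiff, mcStep, mul_comm, show k - 1 + 1 = k by omega]

lemma S_rec_false (N k : ℕ) :
    S p00 p01 p10 p11 false (N+1) k
      = p10 * S p00 p01 p10 p11 true N k + p00 * S p00 p01 p10 p11 false N k := by
  rw [S_rec]
  unfold S
  rw [Finset.sum_filter, Finset.sum_filter, Finset.mul_sum, Finset.mul_sum,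
      ← Finset.sum_add_distrib]
  apply Finset.sum_congr rfl
  intro u _
  cases hu : u (Fin.last N) <;> by_cases h0 : u 0 = true <;>
    by_cases hv : visitsS1 u = k <;>
    simp [hu, h0, hv, mcStep, mul_comm]

end Stmt13

namespace Stmt13
variable (p00 p01 p10 p11 : ℝ)

lemma visits_le {N : ℕ} (w : Fin N → Bool) : visitsS1 w ≤ N := by
  unfold visitsS1
  calc (Finset.univ.filter fun i : Fin N => w i = true).card
      ≤ (Finset.univ : Finset (Fin N)).card := Finset.card_le_card (Finset.filter_subset _ _)
    _ = N := by simp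

lemma visits_eq_card_iff {N : ℕ} (w : Fin N → Bool) (h : visitsS1 w = N) :
    ∀ i, w i = true := by
  unfold visitsS1 at h
  have huniv : (Finset.univ.filter fun i : Fin N => w i = true) = Finset.univ := by
    apply Finset.eq_univ_of_card
    simpa using h
  intro i
  have := Finset.mem_filter.1 (huniv ▸ Finset.mem_univ i)
  exact this.2

lemma S_true_all (N : ℕ) : S p00 p01 p10 p11 true N (N+1) = p11 ^ N := by
  unfold S
  have hset : (Finset.univ.filter (fun w : Fin (N+1) → Bool =>
      w 0 = true ∧ w (Fin.last N) = true ∧ visitsS1 w = N+1)) = {fun _ => true} := by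
    ext w
    simp only [Finset.mem_filter, Finset.mem_univ, true_and, Finset.mem_singleton]
    constructor
    · rintro ⟨-, -, hv⟩
      funext i
      exact visits_eq_card_iff w hv i
    · rintro rfl
      refine ⟨rfl, rfl, ?_⟩
      simp [visitsS1]
  rw [hset, Finset.sum_singleton]
  unfold pathWeight
  simp [mcStep]

lemma S_false_all (N : ℕ) : S p00 p01 p10 p11 false N (N+1) = 0 := by
  unfold S
  have hset : (Finset.univ.filter (fun w : Fin (N+1) → Bool =>
      w 0 = true ∧ w (Fin.last N) = false ∧ visitsS1 w = N+1)) = ∅ := by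
    apply Finset.eq_empty_of_forall_notMem
    intro w hw
    rw [Finset.mem_filter] at hw
    obtain ⟨-, h0, hl, hv⟩ := hw
    have := visits_eq_card_iff w hv (Fin.last N)
    rw [hl] at this
    exact Bool.false_ne_true this
  rw [hset, Finset.sum_empty]

lemma S_true_one (N : ℕ) : S p00 p01 p10 p11 true (N+1) 1 = 0 := by
  unfold S
  have hset : (Finset.univ.filter (fun w : Fin (N+2) → Bool =>
      w 0 = true ∧ w (Fin.last (N+1)) = true ∧ visitsS1 w = 1)) = ∅ := by
    apply Finset.eq_empty_of_forall_notMem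
    intro w hw
    rw [Finset.mem_filter] at hw
    obtain ⟨-, h0, hl, hv⟩ := hw
    have hsub : ({0, Fin.last (N+1)} : Finset (Fin (N+2))) ⊆
        Finset.univ.filter (fun i => w i = true) := by
      intro i hi
      rw [Finset.mem_insert, Finset.mem_singleton] at hi
      rcases hi with rfl | rfl <;> simp [h0, hl]
    have h2 : 2 ≤ visitsS1 w := by
      unfold visitsS1
      calc 2 = ({0, Fin.last (N+1)} : Finset (Fin (N+2))).card := by
              rw [Finset.card_pair]
              intro h
              have := Fin.val_eq_of_eq h
              simp [Fin.last] at this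
        _ ≤ _ := Finset.card_le_card hsub
    omega
  rw [hset, Finset.sum_empty]

end Stmt13

namespace Stmt13

variable (p00 p01 p10 p11 : ℝ)

noncomputable def Gtt (n k j : ℕ) : ℝ :=
  (Nat.choose (k-1) j : ℝ) * p11 ^ (k-j-1) * p10 ^ j *
    (Nat.choose (n-k-1) (j-1) : ℝ) * p01 ^ j * p00 ^ (n-k-j)

noncomputable def Gtf (n k j : ℕ) : ℝ :=
  (Nat.choose (k-1) (j-1) : ℝ) * p11 ^ (k-j) * p10 ^ j *
    (Nat.choose (n-k-1) (j-1) : ℝ) * p01 ^ (j-1) * p00 ^ (n-k-j)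

noncomputable def Ftt (n k : ℕ) : ℝ := ∑ j ∈ range n, Gtt p00 p01 p10 p11 n k (j+1)
noncomputable def Ftf (n k : ℕ) : ℝ := ∑ j ∈ range n, Gtf p00 p01 p10 p11 n k (j+1)

lemma Gtt_zero₁ {n k j : ℕ} (h1 : 1 ≤ j) (h : k ≤ j) : Gtt p00 p01 p10 p11 n k j = 0 := by
  simp [Gtt, Nat.choose_eq_zero_of_lt (show k - 1 < j by omega)]

lemma Gtt_zero₂ {n k j : ℕ} (hk : k < n) (h : n - k < j) : Gtt p00 p01 p10 p11 n k j = 0 := by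
  simp [Gtt, Nat.choose_eq_zero_of_lt (show n - k - 1 < j - 1 by omega)]

lemma Gtf_zero₁ {n k j : ℕ} (hk : 1 ≤ k) (h : k < j) : Gtf p00 p01 p10 p11 n k j = 0 := by
  simp [Gtf, Nat.choose_eq_zero_of_lt (show k - 1 < j - 1 by omega)]

lemma Gtf_zero₂ {n k j : ℕ} (hk : k < n) (h : n - k < j) : Gtf p00 p01 p10 p11 n k j = 0 := by
  simp [Gtf, Nat.choose_eq_zero_of_lt (show n - k - 1 < j - 1 by omega)]

lemma Ftt_ext {n k m : ℕ} (hk : k ≤ n) (hm : n ≤ m) :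
    (∑ j ∈ range m, Gtt p00 p01 p10 p11 n k (j+1)) = Ftt p00 p01 p10 p11 n k := by
  rw [Ftt]
  exact (Finset.sum_subset (Finset.range_subset_range.2 hm) (fun j _ hj => by
    rw [Finset.mem_range, not_lt] at hj
    exact Gtt_zero₁ _ _ _ _ (by omega) (by omega))).symm

lemma Ftf_ext {n k m : ℕ} (hk1 : 1 ≤ k) (hk : k ≤ n) (hm : n ≤ m) :
    (∑ j ∈ range m, Gtf p00 p01 p10 p11 n k (j+1)) = Ftf p00 p01 p10 p11 n k := by
  rw [Ftf]
  exact (Finset.sum_subset (Finset.range_subset_range.2 hm) (fun j _ hj => by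
    rw [Finset.mem_range, not_lt] at hj
    exact Gtf_zero₁ _ _ _ _ hk1 (by omega))).symm

end Stmt13


namespace Stmt13
variable (p00 p01 p10 p11 : ℝ)

lemma term_tt (N k j : ℕ) (h2 : 2 ≤ k) (hk : k ≤ N+1) :
    Gtt p00 p01 p10 p11 (N+2) k (j+1)
      = p11 * Gtt p00 p01 p10 p11 (N+1) (k-1) (j+1)
        + p01 * Gtf p00 p01 p10 p11 (N+1) (k-1) (j+1) := by
  simp only [Gtt, Gtf]
  rw [show (N+2) - k - 1 = (N+1) - (k-1) - 1 by omega,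
      show (N+2) - k - (j+1) = (N+1) - (k-1) - (j+1) by omega,
      show (j+1) - 1 = j from rfl,
      show k - 1 - 1 = k - 2 by omega]
  by_cases hA : j + 1 ≤ k - 2
  · rw [show k - (j+1) - 1 = ((k-1) - (j+1) - 1) + 1 by omega,
        show (k-1) - (j+1) = j + 1 - (j+1) + ((k-1) - (j+1) - 1) + 1 by omega,
        show k - 1 = (k-2)+1 by omega,
        Nat.choose_succ_succ (k-2) j]
    push_cast
    ring
  · by_cases hB : j + 1 = k - 1
    · rw [show k - (j+1) - 1 = 0 by omega, show (k-1) - (j+1) = 0 by omega,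
          show k - 1 = (k-2)+1 by omega, Nat.choose_succ_succ (k-2) j,
          Nat.choose_eq_zero_of_lt (show k-2 < j+1 by omega)]
      push_cast
      ring
    · rw [Nat.choose_eq_zero_of_lt (show k-1 < j+1 by omega),
          Nat.choose_eq_zero_of_lt (show k-2 < j+1 by omega),
          Nat.choose_eq_zero_of_lt (show k-2 < j by omega)]
      push_cast
      ring

end Stmt13

namespace Stmt13
variable (p00 p01 p10 p11 : ℝ)

lemma alg_tt (N k : ℕ) (h2 : 2 ≤ k) (hk : k ≤ N+1) :
    Ftt p00 p01 p10 p11 (N+2) k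
      = p11 * Ftt p00 p01 p10 p11 (N+1) (k-1) + p01 * Ftf p00 p01 p10 p11 (N+1) (k-1) := by
  rw [← Ftt_ext p00 p01 p10 p11 (n := N+1) (k := k-1) (m := N+2) (by omega) (by omega),
      ← Ftf_ext p00 p01 p10 p11 (n := N+1) (k := k-1) (m := N+2) (by omega) (by omega) (by omega),
      Ftt, Finset.mul_sum, Finset.mul_sum, ← Finset.sum_add_distrib]
  exact Finset.sum_congr rfl fun j _ => term_tt p00 p01 p10 p11 N k j h2 hk

lemma term_tf0 (N k : ℕ) (h1 : 1 ≤ k) (hk : k ≤ N) :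
    Gtf p00 p01 p10 p11 (N+2) k 1 = p00 * Gtf p00 p01 p10 p11 (N+1) k 1 := by
  simp only [Gtf]
  rw [show (N+2) - k - 1 = ((N+1) - k - 1) + 1 by omega]
  simp only [Nat.choose_zero_right, pow_succ]
  push_cast
  ring_nf
  simp [Nat.choose_zero_right]

lemma term_tf (N k j : ℕ) (h1 : 1 ≤ k) (hk : k ≤ N) :
    Gtf p00 p01 p10 p11 (N+2) k (j+2)
      = p10 * Gtt p00 p01 p10 p11 (N+1) k (j+1) + p00 * Gtf p00 p01 p10 p11 (N+1) k (j+2) := by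
  simp only [Gtt, Gtf]
  rw [show (j+2) - 1 = j+1 from rfl, show (j+1) - 1 = j from rfl,
      show k - (j+2) = k - (j+1) - 1 by omega,
      show (N+2) - k - (j+2) = (N+1) - k - (j+1) by omega]
  by_cases hA : j + 1 ≤ N - k
  · rw [show (N+2) - k - 1 = ((N+1)-k-1)+1 by omega,
        show (N+1) - k - (j+2) = (N+1) - k - (j+1) - 1 by omega,
        show (N+1) - k - (j+1) = ((N+1) - k - (j+1) - 1) + 1 by omega,
        Nat.choose_succ_succ ((N+1)-k-1) j]
    push_cast
    ring
  · by_cases hB : j = N - k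
    · rw [show (N+1) - k - (j+1) = 0 by omega,
          show (N+1) - k - (j+2) = 0 by omega,
          show (N+2) - k - 1 = ((N+1)-k-1)+1 by omega,
          Nat.choose_succ_succ ((N+1)-k-1) j,
          Nat.choose_eq_zero_of_lt (show (N+1)-k-1 < j+1 by omega)]
      push_cast
      ring
    · rw [Nat.choose_eq_zero_of_lt (show (N+2)-k-1 < j+1 by omega),
          Nat.choose_eq_zero_of_lt (show (N+1)-k-1 < j by omega),
          Nat.choose_eq_zero_of_lt (show (N+1)-k-1 < j+1 by omega)]
      push_cast
      ring

lemma alg_tf (N k : ℕ) (h1 : 1 ≤ k) (hk : k ≤ N) :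
    Ftf p00 p01 p10 p11 (N+2) k
      = p10 * Ftt p00 p01 p10 p11 (N+1) k + p00 * Ftf p00 p01 p10 p11 (N+1) k := by
  have h1' : Ftf p00 p01 p10 p11 (N+2) k
      = (∑ j ∈ range (N+1), Gtf p00 p01 p10 p11 (N+2) k (j+1+1))
        + Gtf p00 p01 p10 p11 (N+2) k (0+1) := by
    rw [Ftf, Finset.sum_range_succ']
  have h2' : p00 * Ftf p00 p01 p10 p11 (N+1) k
      = (∑ j ∈ range (N+1), p00 * Gtf p00 p01 p10 p11 (N+1) k (j+1+1))
        + p00 * Gtf p00 p01 p10 p11 (N+1) k (0+1) := by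
    rw [← Ftf_ext p00 p01 p10 p11 (n := N+1) (k := k) (m := N+2) h1 (by omega) (by omega),
        Finset.mul_sum, Finset.sum_range_succ']
  have h3' : p10 * Ftt p00 p01 p10 p11 (N+1) k
      = ∑ j ∈ range (N+1), p10 * Gtt p00 p01 p10 p11 (N+1) k (j+1) := by
    rw [Ftt, Finset.mul_sum]
  rw [h1', h2', h3', add_comm (∑ j ∈ range (N+1), p10 * Gtt p00 p01 p10 p11 (N+1) k (j+1)),
      add_assoc, add_comm (p00 * Gtf p00 p01 p10 p11 (N+1) k (0+1)), ← add_assoc,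
      ← Finset.sum_add_distrib]
  congr 1
  · apply Finset.sum_congr rfl
    intro j _
    exact (term_tf p00 p01 p10 p11 N k j h1 hk).trans (add_comm _ _)
  · exact term_tf0 p00 p01 p10 p11 N k h1 hk

end Stmt13

namespace Stmt13
variable (p00 p01 p10 p11 : ℝ)

lemma Ftt_one (n : ℕ) : Ftt p00 p01 p10 p11 n 1 = 0 := by
  rw [Ftt]
  apply Finset.sum_eq_zero
  intro j _
  exact Gtt_zero₁ p00 p01 p10 p11 (by omega) (by omega)

lemma Ftf_top (N : ℕ) : Ftf p00 p01 p10 p11 (N+2) (N+1) = p10 * p11 ^ N := by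
  rw [Ftf, Finset.sum_eq_single 0]
  · simp only [Gtf]
    rw [show (N+2)-(N+1)-(0+1) = 0 by omega]
    norm_num
    ring
  · intro j _ hj
    exact Gtf_zero₂ p00 p01 p10 p11 (by omega) (by omega)
  · intro h
    simp at h

lemma main : ∀ N k : ℕ, 1 ≤ k → k ≤ N →
    S p00 p01 p10 p11 true N k = Ftt p00 p01 p10 p11 (N+1) k ∧
    S p00 p01 p10 p11 false N k = Ftf p00 p01 p10 p11 (N+1) k := by
  intro N
  induction N with
  | zero => intro k h1 h2; omega
  | succ N ih =>
    intro k h1 h2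
    constructor
    · by_cases hk1 : k = 1
      · subst hk1
        rw [S_true_one, Ftt_one]
      · have h2k : 2 ≤ k := by omega
        rw [S_rec_true p00 p01 p10 p11 N k (by omega),
            (ih (k-1) (by omega) (by omega)).1, (ih (k-1) (by omega) (by omega)).2,
            alg_tt p00 p01 p10 p11 N k h2k (by omega)]
    · by_cases hkN : k ≤ N
      · rw [S_rec_false, (ih k h1 hkN).1, (ih k h1 hkN).2,
            alg_tf p00 p01 p10 p11 N k h1 hkN]
      · have hk : k = N + 1 := by omega
        subst hk
        rw [S_rec_false, S_true_all, S_false_all, Ftf_top]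
        ring

end Stmt13

theorem stmt13 (p00 p01 p10 p11 : ℝ) (N k : ℕ) (hN : 2 ≤ N) (hk0 : 0 < k) (hkN : k < N) :
    ∑ w ∈ Finset.univ.filter (fun w : Fin N → Bool =>
        w ⟨0, by omega⟩ = true ∧ w ⟨N - 1, by omega⟩ = true ∧ visitsS1 w = k),
      pathWeight p00 p01 p10 p11 w =
    ∑ j ∈ Finset.Icc 1 (min (k - 1) (N - k)),
        (Nat.choose (k - 1) j : ℝ) * p11 ^ (k - j - 1) * p10 ^ j *
          (Nat.choose (N - k - 1) (j - 1) : ℝ) * p01 ^ j * p00 ^ (N - k - j) := by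
  obtain ⟨M, rfl⟩ : ∃ M, N = M + 2 := ⟨N - 2, by omega⟩
  have hmain := (Stmt13.main p00 p01 p10 p11 (M+1) k hk0 (by omega)).1
  have hL : (∑ w ∈ Finset.univ.filter (fun w : Fin (M+2) → Bool =>
        w ⟨0, by omega⟩ = true ∧ w ⟨M + 2 - 1, by omega⟩ = true ∧ visitsS1 w = k),
      pathWeight p00 p01 p10 p11 w) = Stmt13.S p00 p01 p10 p11 true (M+1) k := by
    unfold Stmt13.S
    apply Finset.sum_congr
    · congr 1
    · intros; rfl
  rw [hL, hmain]
  -- now show Ftt (M+2) k equals the Icc sum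
  have h1 : Stmt13.Ftt p00 p01 p10 p11 (M+2) k
      = ∑ j ∈ Finset.Icc 1 (M+2), Stmt13.Gtt p00 p01 p10 p11 (M+2) k j := by
    rw [← Finset.Ico_add_one_right_eq_Icc, Finset.sum_Ico_eq_sum_range, Stmt13.Ftt]
    apply Finset.sum_congr (by norm_num)
    intro j _
    rw [add_comm j 1]
  have h2 : (∑ j ∈ Finset.Icc 1 (M+2), Stmt13.Gtt p00 p01 p10 p11 (M+2) k j)
      = ∑ j ∈ Finset.Icc 1 (min (k-1) (M+2-k)), Stmt13.Gtt p00 p01 p10 p11 (M+2) k j := by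
    refine (Finset.sum_subset (Finset.Icc_subset_Icc_right (by omega)) ?_).symm
    intro j hj hj'
    rw [Finset.mem_Icc] at hj hj'
    by_cases hc : k ≤ j
    · exact Stmt13.Gtt_zero₁ p00 p01 p10 p11 (by omega) hc
    · exact Stmt13.Gtt_zero₂ p00 p01 p10 p11 (by omega) (by omega)
  rw [h1, h2]
  rfl
end

section
/- Let N ≥ 2 and 0 < k < N, and let w : Fin N → Bool satisfy w(0) = false, w(N−1) = true, and have exactly k visits to S1. Then the number j of ascents of w satisfies 1 ≤ j ≤ min(k, N−k), and the number of descents of w equals j − 1. (This justifies the summation limit c₁(k,N) = min(k, N−k) for part L in Theorem 1.) -/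
open Finset

/-!
Reading `w` as a 0/1 sequence, each ascent is a step `+1` and each descent a step `-1`, so
the sum telescopes: `#ascents - #descents = w (N-1) - w 0`, which is `1` for a path from S0 to
S1. Each ascent ends at a distinct visit to S1 and starts at a distinct visit to S0, so
there are at most `k` and at most `N - k` of them.
-/

lemma Bool.ascent_sub_descent (a b : Bool) :
    ((if a = false ∧ b = true then 1 else 0 : ℤ) - if a = true ∧ b = false then 1 else 0) =
      b.toNat - a.toNat := by
  cases a <;> cases b <;> simp

lemma card_filter_eq_false_eq_sub_visitsS1 {N : ℕ} (w : Fin N → Bool) :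
    #{i | w i = false} = N - visitsS1 w := by
  have h := card_filter_add_card_filter_not (s := univ) fun i : Fin N => w i = true
  simp only [Bool.not_eq_true, card_univ, Fintype.card_fin] at h
  rw [visitsS1]
  omega

lemma ascents_sub_descents {N : ℕ} (hN : 1 ≤ N) (w : Fin N → Bool) :
    (ascents w : ℤ) - descents w = (w ⟨N - 1, by omega⟩).toNat - (w ⟨0, hN⟩).toNat := by
  -- any extension of `w` to `ℕ` lets the telescoping sum over `range (N - 1)` apply
  obtain ⟨v, hv⟩ : ∃ v : ℕ → ℤ, ∀ n (h : n < N), v n = (w ⟨n, h⟩).toNat :=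
    ⟨fun n => if h : n < N then (w ⟨n, h⟩).toNat else 0, fun n h => dif_pos h⟩
  calc (ascents w : ℤ) - descents w = ∑ i : Fin (N - 1), (v (i + 1) - v i) := by
        rw [ascents, descents, natCast_card_filter, natCast_card_filter, ← sum_sub_distrib]
        refine sum_congr rfl fun i _ => ?_
        rw [hv i (by omega), hv (i + 1) (by omega)]
        exact Bool.ascent_sub_descent _ _
    _ = v (N - 1) - v 0 := by
        rw [Fin.sum_univ_eq_sum_range (fun i => v (i + 1) - v i), sum_range_sub]
    _ = _ := by rw [hv (N - 1) (by omega), hv 0 hN]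

lemma ascents_le_visitsS1 {N : ℕ} (w : Fin N → Bool) : ascents w ≤ visitsS1 w := by
  refine card_le_card_of_injOn (fun i => ⟨i + 1, by omega⟩) (fun i hi => ?_) ?_
  · simp only [coe_filter, mem_univ, true_and, Set.mem_ofPred_eq] at hi ⊢
    exact hi.2
  · intro i _ j _ hij
    simpa [Fin.ext_iff] using hij

lemma ascents_le_sub_visitsS1 {N : ℕ} (w : Fin N → Bool) : ascents w ≤ N - visitsS1 w := by
  rw [← card_filter_eq_false_eq_sub_visitsS1]
  refine card_le_card_of_injOn (fun i => ⟨i, by omega⟩) (fun i hi => ?_) ?_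
  · simp only [coe_filter, mem_univ, true_and, Set.mem_ofPred_eq] at hi ⊢
    exact hi.1
  · intro i _ j _ hij
    simpa [Fin.ext_iff] using hij

theorem stmt19 (N k : ℕ) (hN : 2 ≤ N)
    (w : Fin N → Bool) (h0 : w ⟨0, by omega⟩ = false) (hl : w ⟨N - 1, by omega⟩ = true)
    (hv : visitsS1 w = k) :
    1 ≤ ascents w ∧ ascents w ≤ min k (N - k) ∧ descents w = ascents w - 1 := by
  have hdiff := ascents_sub_descents (by omega) w
  rw [h0, hl, Bool.toNat_true, Bool.toNat_false] at hdiff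
  have hk := ascents_le_visitsS1 w
  have hNk := ascents_le_sub_visitsS1 w
  subst hv
  refine ⟨by omega, le_min hk hNk, by omega⟩
end
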